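/- For every α ∈ (m, M), the cumulative distribution function of (b_n) does not exist at α: the limit lim_{x→∞} D(x, α)/x does not exist, where D(x, α) = #{1 ≤ n ≤ x : b_n ≤ α}. -/

import Mathlib

open Real Filter Set MeasureTheory Topology
open scoped Classical ENNReal

/-- The Cantor-integer function: apply the digit map `h` to the `s`-ary digits of `n`
and read the result in base `p`. -/
def cantorInt (p s : ℕ) (h : ℕ → ℕ) (n : ℕ) : ℕ :=
  (Nat.digits s n).foldr (fun d acc => h d + p * acc) 0

/-- `b n = a n / n ^ (log_s p)`. -/
noncomputable def cantorB (p s : ℕ) (h : ℕ → ℕ) (n : ℕ) : ℝ :=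
  (cantorInt p s h n : ℝ) / (n : ℝ) ^ Real.logb s p

/-- `a(x) = a_⌊x⌋`. -/
noncomputable def cantorA (p s : ℕ) (h : ℕ → ℕ) (x : ℝ) : ℝ :=
  (cantorInt p s h ⌊x⌋₊ : ℝ)

/-!
Write `β = log_s p`. On the block `N s^K ≤ n < (N + 1) s^K` the digits of `n` are those of `N`
followed by `K` arbitrary digits, so `p^K a_N ≤ a_n < p^K (a_N + 1)`, while
`N^β p^K ≤ n^β ≤ (N + 1)^β p^K`. Hence, uniformly in `K`, every `b_n` on the block lies between
`a_N / (N + 1)^β` and `(a_N + 1) / N^β`. If `D(x, α) / x → c`, the proportion of the block counted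
by `D` tends to `c`. Since `α > m` there is an `N` with `(a_N + 1) / N^β < α`: repeating the digit
string of some `n` with `b_n < α` never increases `b` (superadditivity of `x ↦ x^β`, as `β ≥ 1`)
and makes `N` large. This forces `c = 1`. Since `α < M`, appending zeros to some `n` with
`b_n > α` gives an `N` with `a_N / (N + 1)^β > α`, forcing `c = 0`.
-/

section CantorInt

variable {p s : ℕ} {h : ℕ → ℕ}

@[simp] lemma cantorInt_zero : cantorInt p s h 0 = 0 := by simp [cantorInt]

lemma cantorInt_add_mul (hs : 1 < s) {d n : ℕ} (hd : d < s) (hn : n ≠ 0) :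
    cantorInt p s h (d + s * n) = h d + p * cantorInt p s h n := by
  rw [cantorInt, Nat.digits_add s hs d n hd (Or.inr hn)]
  rfl

lemma foldr_digit_map_eq (l : List ℕ) (x : ℕ) :
    l.foldr (fun d acc => h d + p * acc) x =
      l.foldr (fun d acc => h d + p * acc) 0 + p ^ l.length * x := by
  induction l with
  | nil => simp
  | cons d l ih => simp only [List.foldr_cons, ih, List.length_cons]; ring

lemma cantorInt_add_pow_length_mul (hs : 0 < s) (n m : ℕ) :
    cantorInt p s h (n + s ^ (Nat.digits s n).length * m) =
      cantorInt p s h n + p ^ (Nat.digits s n).length * cantorInt p s h m := by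
  simp only [cantorInt]
  rw [← Nat.digits_append_digits hs, List.foldr_append, foldr_digit_map_eq]

lemma cantorInt_mul_pow_succ_add (hs : 1 < s) {N : ℕ} (hN : N ≠ 0) (K r : ℕ) :
    cantorInt p s h (N * s ^ (K + 1) + r) =
      h (r % s) + p * cantorInt p s h (N * s ^ K + r / s) := by
  have hsplit : N * s ^ (K + 1) + r = r % s + s * (N * s ^ K + r / s) := by
    nth_rewrite 1 [← Nat.mod_add_div r s]
    ring
  have hpos : 0 < N * s ^ K + r / s := by positivity
  rw [hsplit, cantorInt_add_mul hs (Nat.mod_lt r (by omega)) hpos.ne']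

lemma pow_mul_cantorInt_le (hs : 1 < s) {N : ℕ} (hN : N ≠ 0) {K r : ℕ} (hr : r < s ^ K) :
    p ^ K * cantorInt p s h N ≤ cantorInt p s h (N * s ^ K + r) := by
  induction K generalizing r with
  | zero =>
    obtain rfl : r = 0 := by simpa using hr
    simp
  | succ K ih =>
    have hr' : r / s < s ^ K := Nat.div_lt_of_lt_mul (by rwa [← pow_succ'])
    rw [cantorInt_mul_pow_succ_add hs hN, pow_succ', mul_assoc]
    exact le_add_left (Nat.mul_le_mul_left p (ih hr'))

lemma cantorInt_mul_pow_add_add_one_le (hs : 1 < s) (hrange : ∀ i, i < s → h i < p)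
    {N : ℕ} (hN : N ≠ 0) {K r : ℕ} (hr : r < s ^ K) :
    cantorInt p s h (N * s ^ K + r) + 1 ≤ p ^ K * (cantorInt p s h N + 1) := by
  induction K generalizing r with
  | zero =>
    obtain rfl : r = 0 := by simpa using hr
    simp
  | succ K ih =>
    have hr' : r / s < s ^ K := Nat.div_lt_of_lt_mul (by rwa [← pow_succ'])
    have hdigit : h (r % s) + 1 ≤ p := hrange _ (Nat.mod_lt r (by omega))
    rw [cantorInt_mul_pow_succ_add hs hN, pow_succ', mul_assoc]
    nlinarith [Nat.mul_le_mul_left p (ih hr')]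

end CantorInt

section CantorB

variable {p s : ℕ} {h : ℕ → ℕ}

lemma natCast_pow_rpow_logb (hs : 1 < s) (hp : 0 < p) (K : ℕ) :
    ((s : ℝ) ^ K) ^ logb s p = (p : ℝ) ^ K := by
  have hs' : (1 : ℝ) < s := by exact_mod_cast hs
  rw [← Real.rpow_pow_comm (by linarith), Real.rpow_logb (by linarith) hs'.ne'
    (by exact_mod_cast hp)]

lemma one_le_logb (hs : 1 < s) (hsp : s ≤ p) : 1 ≤ logb s p := by
  have hs' : (1 : ℝ) < s := by exact_mod_cast hs
  have hsp' : (s : ℝ) ≤ p := by exact_mod_cast hsp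
  rwa [Real.le_logb_iff_rpow_le hs' (by linarith), Real.rpow_one]

lemma cantorB_nonneg (n : ℕ) : 0 ≤ cantorB p s h n := by
  unfold cantorB
  positivity

lemma cantorInt_eq_cantorB_mul (n : ℕ) :
    (cantorInt p s h n : ℝ) = cantorB p s h n * (n : ℝ) ^ logb s p := by
  rcases eq_or_ne n 0 with rfl | hn
  · simp [cantorB]
  · rw [cantorB, div_mul_cancel₀ _ (by positivity)]

lemma exists_eq_mul_pow_add_of_mem_Ico {N K n : ℕ}
    (hn : n ∈ Finset.Ico (N * s ^ K) ((N + 1) * s ^ K)) :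
    ∃ r < s ^ K, n = N * s ^ K + r := by
  rw [Finset.mem_Ico, add_mul, one_mul] at hn
  exact ⟨n - N * s ^ K, by omega, by omega⟩

lemma cantorB_le_of_mem_Ico (hs : 1 < s) (hp : 0 < p) (hrange : ∀ i, i < s → h i < p)
    {N K n : ℕ} (hN : N ≠ 0) (hn : n ∈ Finset.Ico (N * s ^ K) ((N + 1) * s ^ K)) :
    cantorB p s h n ≤ (cantorInt p s h N + 1) / (N : ℝ) ^ logb s p := by
  obtain ⟨r, hr, rfl⟩ := exists_eq_mul_pow_add_of_mem_Ico hn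
  have hβ : 0 ≤ logb s p := Real.logb_nonneg (by exact_mod_cast hs) (by exact_mod_cast hp)
  have hnum : (cantorInt p s h (N * s ^ K + r) : ℝ) ≤ p ^ K * (cantorInt p s h N + 1) := by
    exact_mod_cast (Nat.le_succ _).trans (cantorInt_mul_pow_add_add_one_le hs hrange hN hr)
  have hden : (N : ℝ) ^ logb s p * p ^ K ≤ ((N * s ^ K + r : ℕ) : ℝ) ^ logb s p := by
    rw [← natCast_pow_rpow_logb hs hp, ← Real.mul_rpow (by positivity) (by positivity)]
    gcongr
    push_cast
    exact le_add_of_nonneg_right (Nat.cast_nonneg r)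
  calc cantorB p s h (N * s ^ K + r)
      ≤ p ^ K * (cantorInt p s h N + 1) / ((N : ℝ) ^ logb s p * p ^ K) := by
        rw [cantorB]
        gcongr
    _ = (cantorInt p s h N + 1) / (N : ℝ) ^ logb s p := by
        rw [mul_comm ((N : ℝ) ^ _), mul_div_mul_left _ _ (by positivity)]

lemma le_cantorB_of_mem_Ico (hs : 1 < s) (hp : 0 < p) {N K n : ℕ} (hN : N ≠ 0)
    (hn : n ∈ Finset.Ico (N * s ^ K) ((N + 1) * s ^ K)) :
    cantorInt p s h N / ((N : ℝ) + 1) ^ logb s p ≤ cantorB p s h n := by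
  obtain ⟨r, hr, rfl⟩ := exists_eq_mul_pow_add_of_mem_Ico hn
  have hβ : 0 ≤ logb s p := Real.logb_nonneg (by exact_mod_cast hs) (by exact_mod_cast hp)
  have hnum : (p : ℝ) ^ K * cantorInt p s h N ≤ cantorInt p s h (N * s ^ K + r) := by
    exact_mod_cast pow_mul_cantorInt_le hs hN hr
  have hden : ((N * s ^ K + r : ℕ) : ℝ) ^ logb s p ≤ ((N : ℝ) + 1) ^ logb s p * p ^ K := by
    rw [← natCast_pow_rpow_logb hs hp, ← Real.mul_rpow (by positivity) (by positivity)]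
    gcongr
    have : (r : ℝ) + 1 ≤ (s : ℝ) ^ K := by exact_mod_cast hr
    push_cast
    linarith
  calc cantorInt p s h N / ((N : ℝ) + 1) ^ logb s p
      = p ^ K * cantorInt p s h N / (((N : ℝ) + 1) ^ logb s p * p ^ K) := by
        rw [mul_comm _ ((p : ℝ) ^ K), mul_div_mul_left _ _ (by positivity)]
    _ ≤ cantorB p s h (N * s ^ K + r) := by
        rw [cantorB]
        gcongr

end CantorB

section Extremal

variable {p s : ℕ} {h : ℕ → ℕ}

lemma cantorB_add_pow_length_mul_le_max (hs : 1 < s) (hsp : s ≤ p) {n : ℕ} (hn : n ≠ 0)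
    (m : ℕ) :
    cantorB p s h (n + s ^ (Nat.digits s n).length * m) ≤
      max (cantorB p s h n) (cantorB p s h m) := by
  set L := (Nat.digits s n).length
  set B := max (cantorB p s h n) (cantorB p s h m)
  have hB : 0 ≤ B := (cantorB_nonneg n).trans (le_max_left _ _)
  have hsum : (cantorInt p s h (n + s ^ L * m) : ℝ) ≤
      B * ((n : ℝ) ^ logb s p + ((s : ℝ) ^ L * m) ^ logb s p) :=
    calc (cantorInt p s h (n + s ^ L * m) : ℝ)
        = cantorB p s h n * (n : ℝ) ^ logb s p +
            p ^ L * (cantorB p s h m * (m : ℝ) ^ logb s p) := by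
          rw [cantorInt_add_pow_length_mul (by omega), ← cantorInt_eq_cantorB_mul,
            ← cantorInt_eq_cantorB_mul]
          push_cast
          rfl
      _ ≤ B * (n : ℝ) ^ logb s p + p ^ L * (B * (m : ℝ) ^ logb s p) := by
          gcongr
          · exact le_max_left _ _
          · exact le_max_right _ _
      _ = B * ((n : ℝ) ^ logb s p + ((s : ℝ) ^ L * m) ^ logb s p) := by
          rw [Real.mul_rpow (by positivity) (by positivity), natCast_pow_rpow_logb hs (by omega)]
          ring
  have hpos : (0 : ℝ) < ((n + s ^ L * m : ℕ) : ℝ) := by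
    have : 0 < n + s ^ L * m := by omega
    exact_mod_cast this
  rw [cantorB, div_le_iff₀ (Real.rpow_pos_of_pos hpos _)]
  refine hsum.trans (mul_le_mul_of_nonneg_left ?_ hB)
  push_cast
  exact Real.add_rpow_le_rpow_add (by positivity) (by positivity) (one_le_logb hs hsp)

lemma frequently_cantorB_le (hs : 1 < s) (hsp : s ≤ p) {n : ℕ} (hn : n ≠ 0) :
    ∃ᶠ N in atTop, cantorB p s h N ≤ cantorB p s h n := by
  set f : ℕ → ℕ := fun m => n + s ^ (Nat.digits s n).length * m
  have key : ∀ j, j ≤ f^[j] n ∧ cantorB p s h (f^[j] n) ≤ cantorB p s h n := by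
    intro j
    induction j with
    | zero => exact ⟨Nat.zero_le n, le_rfl⟩
    | succ j ih =>
      rw [Function.iterate_succ_apply']
      refine ⟨?_, (cantorB_add_pow_length_mul_le_max hs hsp hn _).trans (max_le le_rfl ih.2)⟩
      have : f^[j] n ≤ s ^ (Nat.digits s n).length * f^[j] n :=
        Nat.le_mul_of_pos_left _ (by positivity)
      show j + 1 ≤ n + s ^ (Nat.digits s n).length * f^[j] n
      omega
  rw [frequently_atTop]
  exact fun X => ⟨f^[X] n, (key X).1, (key X).2⟩

lemma exists_cantorInt_add_one_div_rpow_lt (hs : 1 < s) (hsp : s ≤ p) {n : ℕ} (hn : n ≠ 0)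
    {α : ℝ} (hα : cantorB p s h n < α) :
    ∃ N ≠ 0, (cantorInt p s h N + 1) / (N : ℝ) ^ logb s p < α := by
  have hβ : 0 < logb s p := one_pos.trans_le (one_le_logb hs hsp)
  have hsmall : ∀ᶠ N : ℕ in atTop, N ≠ 0 ∧ ((N : ℝ) ^ logb s p)⁻¹ < α - cantorB p s h n :=
    (eventually_ne_atTop 0).and <|
      ((tendsto_rpow_atTop hβ).comp tendsto_natCast_atTop_atTop).inv_tendsto_atTop.eventually
        (gt_mem_nhds (sub_pos.2 hα))
  obtain ⟨N, hbN, hN0, hNsmall⟩ :=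
    ((frequently_cantorB_le hs hsp hn).and_eventually hsmall).exists
  refine ⟨N, hN0, ?_⟩
  have hpos : (0 : ℝ) < (N : ℝ) ^ logb s p := by positivity
  rw [cantorInt_eq_cantorB_mul, add_div, mul_div_cancel_right₀ _ hpos.ne', one_div]
  linarith

lemma exists_lt_cantorInt_div_rpow (hs : 1 < s) (hp : 0 < p) {n : ℕ} (hn : n ≠ 0) {α : ℝ}
    (hα : α < cantorB p s h n) :
    ∃ N ≠ 0, α < cantorInt p s h N / ((N : ℝ) + 1) ^ logb s p := by
  have hs' : (1 : ℝ) < s := by exact_mod_cast hs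
  have hn' : (n : ℝ) ≠ 0 := by exact_mod_cast hn
  have hβ : 0 ≤ logb s p := Real.logb_nonneg hs' (by exact_mod_cast hp)
  have hlim : Tendsto (fun k : ℕ => cantorInt p s h n / ((n : ℝ) + ((s : ℝ) ^ k)⁻¹) ^ logb s p)
      atTop (𝓝 (cantorB p s h n)) := by
    have hshift : Tendsto (fun k : ℕ => (n : ℝ) + ((s : ℝ) ^ k)⁻¹) atTop (𝓝 n) := by
      simpa using tendsto_const_nhds.add
        (tendsto_pow_atTop_atTop_of_one_lt hs').inv_tendsto_atTop
    exact ((continuousAt_const.div (Real.continuousAt_rpow_const _ _ (Or.inr hβ))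
      (by positivity)).tendsto.comp hshift)
  obtain ⟨k, hk⟩ := (hlim.eventually (lt_mem_nhds hα)).exists
  refine ⟨n * s ^ k, by positivity, hk.trans_le ?_⟩
  have hsk : (0 : ℝ) < (s : ℝ) ^ k := by positivity
  have hrescale : ((n * s ^ k : ℕ) : ℝ) + 1 = ((n : ℝ) + ((s : ℝ) ^ k)⁻¹) * (s : ℝ) ^ k := by
    push_cast
    field_simp
  have hnum : (p : ℝ) ^ k * cantorInt p s h n ≤ cantorInt p s h (n * s ^ k) := by
    exact_mod_cast pow_mul_cantorInt_le (r := 0) hs hn (by positivity)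
  rw [hrescale, Real.mul_rpow (by positivity) hsk.le, natCast_pow_rpow_logb hs hp,
    mul_comm _ ((p : ℝ) ^ k), ← mul_div_mul_left _ _ (by positivity : (p : ℝ) ^ k ≠ 0)]
  gcongr

end Extremal

section Counting

noncomputable def countLE (P : ℕ → Prop) (x : ℝ) : ℕ :=
  {n : ℕ | 1 ≤ n ∧ (n : ℝ) ≤ x ∧ P n}.ncard

variable {P : ℕ → Prop} {c : ℝ}

lemma countLE_natCast_sub_one (M : ℕ) :
    countLE P (M - 1) = ((Finset.Ico 1 M).filter P).card := by
  rw [countLE, ← Set.ncard_coe_finset]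
  congr 1
  ext n
  simp only [Set.mem_ofPred_eq, Finset.coe_filter, Finset.mem_Ico, le_sub_iff_add_le]
  norm_cast
  simp only [Nat.add_one_le_iff, and_assoc]

lemma tendsto_countLE_mul_sub_one_div
    (hc : Tendsto (fun x : ℝ => (countLE P x : ℝ) / x) atTop (𝓝 c))
    {ℓ : ℕ → ℝ} (hℓ : Tendsto ℓ atTop atTop) {t : ℝ} (ht : 0 < t) :
    Tendsto (fun K => (countLE P (t * ℓ K - 1) : ℝ) / ℓ K) atTop (𝓝 (c * t)) := by
  have hx : Tendsto (fun K => t * ℓ K - 1) atTop atTop :=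
    tendsto_atTop_add_const_right _ _ (hℓ.const_mul_atTop ht)
  have hratio : Tendsto (fun K => (t * ℓ K - 1) / ℓ K) atTop (𝓝 t) := by
    have := (tendsto_const_nhds (x := t)).sub hℓ.inv_tendsto_atTop
    rw [sub_zero] at this
    refine this.congr' ?_
    filter_upwards [hℓ.eventually_gt_atTop 0] with K hK
    rw [Pi.inv_apply]
    field_simp
  refine ((hc.comp hx).mul hratio).congr' ?_
  filter_upwards [hx.eventually_gt_atTop 0] with K hK
  simp only [Function.comp_apply]
  rw [div_mul_div_cancel₀ hK.ne']

lemma tendsto_card_filter_Ico_div {s N : ℕ} (hs : 1 < s) (hN : N ≠ 0)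
    (hc : Tendsto (fun x : ℝ => (countLE P x : ℝ) / x) atTop (𝓝 c)) :
    Tendsto (fun K => (((Finset.Ico (N * s ^ K) ((N + 1) * s ^ K)).filter P).card : ℝ) / s ^ K)
      atTop (𝓝 c) := by
  have hℓ : Tendsto (fun K : ℕ => (s : ℝ) ^ K) atTop atTop :=
    tendsto_pow_atTop_atTop_of_one_lt (by exact_mod_cast hs)
  have hlim := (tendsto_countLE_mul_sub_one_div hc hℓ (t := N + 1) (by positivity)).sub
    (tendsto_countLE_mul_sub_one_div hc hℓ (t := N) (by positivity))
  rw [show c * (N + 1) - c * N = c by ring] at hlim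
  refine hlim.congr fun K => ?_
  have hsplit : ((Finset.Ico 1 ((N + 1) * s ^ K)).filter P).card =
      ((Finset.Ico 1 (N * s ^ K)).filter P).card +
        ((Finset.Ico (N * s ^ K) ((N + 1) * s ^ K)).filter P).card := by
    have h1 : 1 ≤ N * s ^ K := Nat.one_le_iff_ne_zero.2 (by positivity)
    rw [← Finset.card_union_of_disjoint
      (Finset.disjoint_filter_filter (Finset.Ico_disjoint_Ico_consecutive _ _ _)),
      ← Finset.filter_union, Finset.Ico_union_Ico_eq_Ico h1 (by gcongr; omega)]
  have hcast := congrArg (fun k : ℕ => (k : ℝ)) hsplit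
  simp only [Nat.cast_add, ← countLE_natCast_sub_one, Nat.cast_mul, Nat.cast_pow,
    Nat.cast_one] at hcast
  rw [← sub_div, hcast]
  ring

lemma eq_one_of_forall_mem_Ico {s N : ℕ} (hs : 1 < s) (hN : N ≠ 0)
    (hc : Tendsto (fun x : ℝ => (countLE P x : ℝ) / x) atTop (𝓝 c))
    (hP : ∀ K, ∀ n ∈ Finset.Ico (N * s ^ K) ((N + 1) * s ^ K), P n) : c = 1 := by
  refine tendsto_nhds_unique (tendsto_card_filter_Ico_div hs hN hc)
    (tendsto_const_nhds.congr fun K => ?_)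
  rw [Finset.filter_true_of_mem (hP K), Nat.card_Ico, ← Nat.sub_mul, Nat.add_sub_cancel_left,
    one_mul, Nat.cast_pow, div_self (by positivity)]

lemma eq_zero_of_forall_mem_Ico {s N : ℕ} (hs : 1 < s) (hN : N ≠ 0)
    (hc : Tendsto (fun x : ℝ => (countLE P x : ℝ) / x) atTop (𝓝 c))
    (hP : ∀ K, ∀ n ∈ Finset.Ico (N * s ^ K) ((N + 1) * s ^ K), ¬ P n) : c = 0 := by
  refine tendsto_nhds_unique (tendsto_card_filter_Ico_div hs hN hc)
    (tendsto_const_nhds.congr fun K => ?_)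
  rw [Finset.filter_false_of_mem (hP K), Finset.card_empty, Nat.cast_zero, zero_div]

end Counting

theorem stmt14_general (p s : ℕ) (h : ℕ → ℕ) (hs : 2 ≤ s) (hp : s < p)
    (hrange : ∀ i, i < s → h i < p)
    (m M : ℝ) (hm : m = sInf {x : ℝ | ∃ n : ℕ, 1 ≤ n ∧ cantorB p s h n = x})
    (hM : M = sSup {x : ℝ | ∃ n : ℕ, 1 ≤ n ∧ cantorB p s h n = x}) :
    ∀ α : ℝ, m < α → α < M →
      ¬ ∃ c : ℝ, Tendsto
          (fun x : ℝ =>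
            (({n : ℕ | 1 ≤ n ∧ (n : ℝ) ≤ x ∧ cantorB p s h n ≤ α}.ncard : ℝ)) / x)
          atTop (nhds c) := by
  rintro α hmα hαM ⟨c, hc⟩
  have hne : {x : ℝ | ∃ n : ℕ, 1 ≤ n ∧ cantorB p s h n = x}.Nonempty := ⟨_, 1, le_rfl, rfl⟩
  obtain ⟨_, ⟨n₀, hn₀, rfl⟩, hn₀α⟩ := exists_lt_of_csInf_lt hne (hm ▸ hmα)
  obtain ⟨_, ⟨n₁, hn₁, rfl⟩, hαn₁⟩ := exists_lt_of_lt_csSup hne (hM ▸ hαM)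
  obtain ⟨N₀, hN₀, hlow⟩ := exists_cantorInt_add_one_div_rpow_lt hs hp.le (by omega) hn₀α
  obtain ⟨N₁, hN₁, hhigh⟩ := exists_lt_cantorInt_div_rpow hs (by omega) (by omega) hαn₁
  have hc₁ : c = 1 := eq_one_of_forall_mem_Ico hs hN₀ hc fun _ _ hn =>
    (cantorB_le_of_mem_Ico hs (by omega) hrange hN₀ hn).trans hlow.le
  have hc₀ : c = 0 := eq_zero_of_forall_mem_Ico hs hN₁ hc fun _ _ hn =>
    not_le.2 (hhigh.trans_le (le_cantorB_of_mem_Ico hs (by omega) hN₁ hn))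
  exact one_ne_zero (hc₁.symm.trans hc₀)

theorem stmt14 (p s : ℕ) (h : ℕ → ℕ) (hs : 2 ≤ s) (hp : s < p)
    (hmono : ∀ i j, i < j → j < s → h i < h j)
    (hrange : ∀ i, i < s → h i < p)
    (m M : ℝ) (hm : m = sInf {x : ℝ | ∃ n : ℕ, 1 ≤ n ∧ cantorB p s h n = x})
    (hM : M = sSup {x : ℝ | ∃ n : ℕ, 1 ≤ n ∧ cantorB p s h n = x}) :
    ∀ α : ℝ, m < α → α < M →
      ¬ ∃ c : ℝ, Tendsto
          (fun x : ℝ =>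
            (({n : ℕ | 1 ≤ n ∧ (n : ℝ) ≤ x ∧ cantorB p s h n ≤ α}.ncard : ℝ)) / x)
          atTop (nhds c) :=
  stmt14_general p s h hs hp hrange m M hm hM
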